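/- arXiv:2504.15394 — 4 statements merged into one kernel-verified Lean document; each statement's English description precedes it below -/
import Mathlib

section
/- Let f : {0,1}^n → ℝ, let q be a probability distribution on the symmetry group Sym(f), and let Π be a random permutation drawn from q. Then for any A ⊆ [n] and any k ∈ {0,...,n}, the sum over sets S of size k of the squared Fourier coefficients of the restriction f_A equals the sum over sets S of size k of f̂(S)² · Pr(Π(S) ⊆ A). Consequently, Var(f_A) = Σ_{S ≠ ∅} f̂(S)² · Pr(Π(S) ⊆ A). -/
open Finset

/-- Weight of a point under the i.i.d. Bernoulli(p) product measure on `{0,1}^n`. -/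
noncomputable def wt (p : ℝ) {n : ℕ} (x : Fin n → Bool) : ℝ :=
  ∏ i, if x i then p else 1 - p

/-- Expectation with respect to the i.i.d. Bernoulli(p) product measure. -/
noncomputable def pexp (p : ℝ) {n : ℕ} (g : (Fin n → Bool) → ℝ) : ℝ :=
  ∑ x : Fin n → Bool, wt p x * g x

/-- The p-biased Fourier basis function. -/
noncomputable def chi (p : ℝ) {n : ℕ} (S : Finset (Fin n)) (x : Fin n → Bool) : ℝ :=
  ∏ i ∈ S, if x i then -Real.sqrt ((1 - p) / p) else Real.sqrt (p / (1 - p))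

/-- The p-biased Fourier coefficient `f̂(S) = E[f(X)·u_S(X)]`. -/
noncomputable def fhat (p : ℝ) {n : ℕ} (f : (Fin n → Bool) → ℝ)
    (S : Finset (Fin n)) : ℝ :=
  pexp p fun x => f x * chi p S x

/-- The restriction `f_A(x) = E[f(X) | X_A = x_A]`. -/
noncomputable def restrictAvg (p : ℝ) {n : ℕ} (A : Finset (Fin n))
    (f : (Fin n → Bool) → ℝ) : (Fin n → Bool) → ℝ :=
  fun x => pexp p fun y => f fun i => if i ∈ A then x i else y i

/-! For `0 < p < 1` the characters `χ_S` satisfy `∑_S χ_S(x) χ_S(y) = δ_{xy} / Pr[X = x]`, which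
gives Parseval. Averaging `f` over the coordinates outside `A` kills each `χ_S` with `S ⊄ A` and
keeps the others, so `(f_A)^(S) = f̂(S) · 1[S ⊆ A]`. Every `π ∈ Sym(f)` permutes the Fourier
coefficients, `f̂(π S) = f̂(S)`, and preserves `|S|` and `S ≠ ∅`; hence `∑_S f̂(S)² 1[π S ⊆ A]`
is the same for all `π` in the support of `q`, and averaging over `q` changes nothing. -/

noncomputable def chiFactor (p : ℝ) (b : Bool) : ℝ :=
  if b then -Real.sqrt ((1 - p) / p) else Real.sqrt (p / (1 - p))

lemma chi_eq_prod_chiFactor (p : ℝ) {n : ℕ} (S : Finset (Fin n)) (x : Fin n → Bool) :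
    chi p S x = ∏ i ∈ S, chiFactor p (x i) := rfl

lemma pexp_prod_apply (p : ℝ) {n : ℕ} (g : Fin n → Bool → ℝ) :
    pexp p (fun x => ∏ i, g i (x i)) = ∏ i, (p * g i true + (1 - p) * g i false) := by
  simp only [pexp, wt, ← Finset.prod_mul_distrib]
  exact (Fintype.prod_sum fun i b => (if b then p else 1 - p) * g i b).symm.trans (by simp)

lemma wt_pos {p : ℝ} (hp0 : 0 < p) (hp1 : p < 1) {n : ℕ} (x : Fin n → Bool) : 0 < wt p x :=
  Finset.prod_pos fun i _ => by cases x i <;> simp <;> linarith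

section chiFactor

variable {p : ℝ}

lemma chiFactor_true_sq (hp0 : 0 < p) (hp1 : p < 1) : chiFactor p true ^ 2 = (1 - p) / p := by
  have : 0 ≤ (1 - p) / p := div_nonneg (by linarith) hp0.le
  simp [chiFactor, Real.sq_sqrt this]

lemma chiFactor_false_sq (hp0 : 0 < p) (hp1 : p < 1) : chiFactor p false ^ 2 = p / (1 - p) := by
  have : 0 ≤ p / (1 - p) := div_nonneg hp0.le (by linarith)
  simp [chiFactor, Real.sq_sqrt this]

lemma chiFactor_true_mul_chiFactor_false (hp0 : 0 < p) (hp1 : p < 1) :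
    chiFactor p true * chiFactor p false = -1 := by
  have h1 : 0 < 1 - p := by linarith
  simp only [chiFactor, if_true, Bool.false_eq_true, if_false, neg_mul, neg_inj]
  rw [← Real.sqrt_mul (by positivity), div_mul_div_comm, mul_comm (1 - p),
    div_self (by positivity), Real.sqrt_one]

lemma chiFactor_mean (hp0 : 0 < p) (hp1 : p < 1) :
    p * chiFactor p true + (1 - p) * chiFactor p false = 0 := by
  have hsq : p * chiFactor p true ^ 2 = 1 - p := by
    rw [chiFactor_true_sq hp0 hp1]; field_simp
  linear_combination p * chiFactor p true * chiFactor_true_mul_chiFactor_false hp0 hp1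
    - chiFactor p false * hsq

lemma one_add_chiFactor_mul (hp0 : 0 < p) (hp1 : p < 1) (b c : Bool) :
    1 + chiFactor p b * chiFactor p c = if b = c then (if b then p else 1 - p)⁻¹ else 0 := by
  have h1 : 1 - p ≠ 0 := by linarith
  have hmix := chiFactor_true_mul_chiFactor_false hp0 hp1
  cases b <;> cases c <;> simp only [← sq, chiFactor_true_sq hp0 hp1, chiFactor_false_sq hp0 hp1,
    hmix, mul_comm (chiFactor p false)] <;> simp <;> field_simp <;> ring

end chiFactor

section Parseval

variable {p : ℝ} {n : ℕ}

lemma pexp_chi (hp0 : 0 < p) (hp1 : p < 1) (T : Finset (Fin n)) :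
    pexp p (chi p T) = if T = ∅ then 1 else 0 := by
  have hchi : chi p T = fun x => ∏ i, if i ∈ T then chiFactor p (x i) else 1 := by
    ext x; rw [chi_eq_prod_chiFactor, Finset.prod_ite_mem, Finset.univ_inter]
  rw [hchi, pexp_prod_apply p fun i b => if i ∈ T then chiFactor p b else 1]
  split_ifs with hT
  · simp [hT]
  · obtain ⟨j, hj⟩ := Finset.nonempty_iff_ne_empty.mpr hT
    exact Finset.prod_eq_zero (Finset.mem_univ j) (by simpa [hj] using chiFactor_mean hp0 hp1)

lemma sum_chi_mul_chi (hp0 : 0 < p) (hp1 : p < 1) (x y : Fin n → Bool) :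
    ∑ S, chi p S x * chi p S y = if x = y then (wt p x)⁻¹ else 0 := by
  have hprod : ∑ S, chi p S x * chi p S y = ∏ i, (1 + chiFactor p (x i) * chiFactor p (y i)) := by
    simp only [chi_eq_prod_chiFactor, ← Finset.prod_mul_distrib, Finset.prod_one_add,
      Finset.powerset_univ]
  simp only [hprod, one_add_chiFactor_mul hp0 hp1]
  split_ifs with hxy
  · simp [hxy, wt, Finset.prod_inv_distrib]
  · obtain ⟨j, hj⟩ := Function.ne_iff.mp hxy
    exact Finset.prod_eq_zero (Finset.mem_univ j) (if_neg hj)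

theorem sum_fhat_sq (hp0 : 0 < p) (hp1 : p < 1) (g : (Fin n → Bool) → ℝ) :
    ∑ S, fhat p g S ^ 2 = pexp p (fun x => g x ^ 2) := by
  calc ∑ S, fhat p g S ^ 2
      = ∑ x, ∑ y, wt p x * g x * (wt p y * g y) * ∑ S, chi p S x * chi p S y := by
        simp only [fhat, pexp, sq, Finset.sum_mul_sum]
        simp only [Finset.mul_sum]
        rw [Finset.sum_comm]
        refine Finset.sum_congr rfl fun x _ => Finset.sum_comm.trans ?_
        exact Finset.sum_congr rfl fun y _ => Finset.sum_congr rfl fun S _ => by ring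
    _ = ∑ x, wt p x * g x * (wt p x * g x) * (wt p x)⁻¹ := by
        simp only [sum_chi_mul_chi hp0 hp1, mul_ite, mul_zero, Finset.sum_ite_eq,
          Finset.mem_univ, if_true]
    _ = pexp p (fun x => g x ^ 2) := by
        refine Finset.sum_congr rfl fun x _ => ?_
        have := (wt_pos hp0 hp1 x).ne'
        field_simp

theorem pexp_sq_sub_sq_pexp (hp0 : 0 < p) (hp1 : p < 1) (g : (Fin n → Bool) → ℝ) :
    pexp p (fun x => g x ^ 2) - pexp p g ^ 2 = ∑ S ∈ univ.filter (· ≠ ∅), fhat p g S ^ 2 := by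
  have hmean : pexp p g = fhat p g ∅ := by simp [fhat, chi]
  rw [← sum_fhat_sq hp0 hp1, hmean, ← Finset.sum_filter_add_sum_filter_not univ (· = ∅),
    Finset.filter_eq' univ ∅, if_pos (Finset.mem_univ _), Finset.sum_singleton]
  simp only [ne_eq, add_sub_cancel_left]

end Parseval

section Restriction

variable {n : ℕ} (A : Finset (Fin n))

def merge (x y : Fin n → Bool) : Fin n → Bool := fun i => if i ∈ A then x i else y i

lemma merge_merge_merge (x y : Fin n → Bool) : merge A (merge A x y) (merge A y x) = x := by
  ext i; by_cases h : i ∈ A <;> simp [merge, h]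

lemma merge_merge_merge_swap (x y : Fin n → Bool) : merge A (merge A y x) (merge A x y) = y := by
  ext i; by_cases h : i ∈ A <;> simp [merge, h]

def mergeSwap : Equiv.Perm ((Fin n → Bool) × (Fin n → Bool)) :=
  Function.Involutive.toPerm (fun z => (merge A z.1 z.2, merge A z.2 z.1)) fun z =>
    Prod.ext (merge_merge_merge A z.1 z.2) (merge_merge_merge_swap A z.1 z.2)

lemma mergeSwap_apply (z : (Fin n → Bool) × (Fin n → Bool)) :
    mergeSwap A z = (merge A z.1 z.2, merge A z.2 z.1) := rfl

lemma restrictAvg_apply (p : ℝ) (f : (Fin n → Bool) → ℝ) (x : Fin n → Bool) :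
    restrictAvg p A f x = pexp p fun y => f (merge A x y) := rfl

lemma wt_merge_mul_wt_merge (p : ℝ) (x y : Fin n → Bool) :
    wt p (merge A x y) * wt p (merge A y x) = wt p x * wt p y := by
  simp only [wt, ← Finset.prod_mul_distrib]
  refine Finset.prod_congr rfl fun i _ => ?_
  by_cases h : i ∈ A <;> simp [merge, h, mul_comm]

lemma chi_merge (p : ℝ) (S : Finset (Fin n)) (x y : Fin n → Bool) :
    chi p S (merge A x y) = chi p (S ∩ A) x * chi p (S \ A) y := by
  simp only [chi_eq_prod_chiFactor, ← Finset.prod_filter_mul_prod_filter_not S (· ∈ A),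
    Finset.filter_mem_eq_inter, Finset.filter_not]
  rw [Finset.sdiff_inter_self_left]
  congr 1 <;> refine Finset.prod_congr rfl fun i hi => ?_
  · simp [merge, (Finset.mem_inter.mp hi).2]
  · simp [merge, (Finset.mem_sdiff.mp hi).2]

theorem fhat_restrictAvg {p : ℝ} (hp0 : 0 < p) (hp1 : p < 1) (f : (Fin n → Bool) → ℝ)
    (S : Finset (Fin n)) :
    fhat p (restrictAvg p A f) S = if S ⊆ A then fhat p f S else 0 := by
  have hpair : fhat p (restrictAvg p A f) S
      = ∑ z : (Fin n → Bool) × (Fin n → Bool),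
          wt p z.1 * wt p z.2 * f (merge A z.1 z.2) * chi p S z.1 := by
    simp only [fhat, restrictAvg_apply, pexp, Fintype.sum_prod_type, Finset.sum_mul, Finset.mul_sum]
    exact Finset.sum_congr rfl fun x _ => Finset.sum_congr rfl fun y _ => by ring
  have hswap : ∀ z, wt p (mergeSwap A z).1 * wt p (mergeSwap A z).2
        * f (merge A (mergeSwap A z).1 (mergeSwap A z).2) * chi p S (mergeSwap A z).1
      = wt p z.1 * (f z.1 * chi p (S ∩ A) z.1) * (wt p z.2 * chi p (S \ A) z.2) := by
    rintro ⟨x, y⟩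
    simp only [mergeSwap_apply, merge_merge_merge, chi_merge]
    rw [wt_merge_mul_wt_merge]
    ring
  rw [hpair, ← Equiv.sum_comp (mergeSwap A), Finset.sum_congr rfl fun z _ => hswap z,
    Fintype.sum_prod_type]
  simp only [← Finset.mul_sum, ← Finset.sum_mul]
  rw [show ∑ y, wt p y * chi p (S \ A) y = pexp p (chi p (S \ A)) from rfl, pexp_chi hp0 hp1]
  by_cases hS : S ⊆ A
  · simp [hS, Finset.inter_eq_left.mpr hS, fhat, pexp]
  · simp [hS]

end Restriction

lemma Finset.sum_filter_image_perm {α M : Type*} [Fintype α] [DecidableEq α] [AddCommMonoid M]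
    (σ : Equiv.Perm α) (P : Finset α → Prop) [DecidablePred P]
    (hP : ∀ S, P (S.image σ) ↔ P S) (g : Finset α → M) :
    ∑ S ∈ univ.filter P, g (S.image σ) = ∑ S ∈ univ.filter P, g S :=
  Finset.sum_equiv (Equiv.finsetCongr σ) (by simp [Finset.map_eq_image, hP])
    fun S _ => by simp [Finset.map_eq_image]

lemma fhat_image_of_invariant {p : ℝ} {n : ℕ} (f : (Fin n → Bool) → ℝ) (π : Equiv.Perm (Fin n))
    (hf : ∀ x : Fin n → Bool, f (fun i => x (π.symm i)) = f x) (S : Finset (Fin n)) :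
    fhat p f (S.image π) = fhat p f S := by
  refine (Equiv.sum_comp (π.arrowCongr (Equiv.refl Bool)) _).symm.trans
    (Finset.sum_congr rfl fun x _ => ?_)
  have hx : π.arrowCongr (Equiv.refl Bool) x = fun i => x (π.symm i) := rfl
  rw [hx]
  dsimp only
  rw [hf]
  congr 1
  · exact Equiv.prod_comp π.symm fun i => if x i then p else 1 - p
  · congr 1
    simp [chi_eq_prod_chiFactor, Finset.prod_image fun a _ b _ h => π.injective h]

lemma sum_mul_sum_perm_image_subset {α : Type*} [Fintype α] [DecidableEq α] (A : Finset α)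
    (q : Equiv.Perm α → ℝ) (hq1 : ∑ π, q π = 1) (w : Finset α → ℝ)
    (hw : ∀ π, q π ≠ 0 → ∀ S, w (S.image π) = w S)
    (P : Finset α → Prop) [DecidablePred P] (hP : ∀ (π : Equiv.Perm α) S, P (S.image π) ↔ P S) :
    ∑ S ∈ univ.filter P, w S * (∑ π, q π * (if S.image π ⊆ A then (1 : ℝ) else 0))
      = ∑ S ∈ univ.filter P, w S * (if S ⊆ A then (1 : ℝ) else 0) := by
  have hperm : ∀ π, q π * ∑ S ∈ univ.filter P, w S * (if S.image π ⊆ A then (1 : ℝ) else 0)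
      = q π * ∑ S ∈ univ.filter P, w S * (if S ⊆ A then (1 : ℝ) else 0) := by
    intro π
    rcases eq_or_ne (q π) 0 with hq | hq
    · rw [hq, zero_mul, zero_mul]
    · rw [← Finset.sum_filter_image_perm π P (hP π) fun T => w T * if T ⊆ A then (1 : ℝ) else 0]
      exact congrArg _ (Finset.sum_congr rfl fun S _ => by rw [hw π hq])
  calc _ = ∑ π, q π * ∑ S ∈ univ.filter P, w S * (if S.image π ⊆ A then (1 : ℝ) else 0) := by
        simp only [Finset.mul_sum]
        rw [Finset.sum_comm]
        exact Finset.sum_congr rfl fun π _ => Finset.sum_congr rfl fun S _ => by ring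
    _ = _ := by rw [Finset.sum_congr rfl fun π _ => hperm π, ← Finset.sum_mul, hq1, one_mul]

theorem stmt3_general (n : ℕ) (p : ℝ) (hp0 : 0 < p) (hp1 : p < 1)
    (f : (Fin n → Bool) → ℝ) (A : Finset (Fin n))
    (q : Equiv.Perm (Fin n) → ℝ)
    (hq1 : ∑ π : Equiv.Perm (Fin n), q π = 1)
    (hsupp : ∀ π : Equiv.Perm (Fin n), q π ≠ 0 →
      ∀ x : Fin n → Bool, f (fun i => x (π.symm i)) = f x)
    (k : ℕ) :
    ((∑ S ∈ univ.filter (fun S : Finset (Fin n) => S.card = k),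
        fhat p (restrictAvg p A f) S ^ 2)
      = ∑ S ∈ univ.filter (fun S : Finset (Fin n) => S.card = k),
          fhat p f S ^ 2 *
            (∑ π : Equiv.Perm (Fin n), q π * (if S.image π ⊆ A then (1 : ℝ) else 0)))
    ∧ (pexp p (fun x => restrictAvg p A f x ^ 2) - (pexp p (restrictAvg p A f)) ^ 2
      = ∑ S ∈ univ.filter (fun S : Finset (Fin n) => S ≠ ∅),
          fhat p f S ^ 2 *
            (∑ π : Equiv.Perm (Fin n), q π * (if S.image π ⊆ A then (1 : ℝ) else 0))) := by
  have hsq : ∀ S, fhat p (restrictAvg p A f) S ^ 2 = fhat p f S ^ 2 * if S ⊆ A then 1 else 0 := by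
    intro S
    rw [fhat_restrictAvg A hp0 hp1]
    split_ifs <;> simp
  have hw : ∀ π, q π ≠ 0 → ∀ S, fhat p f (S.image π) ^ 2 = fhat p f S ^ 2 :=
    fun π hπ S => by rw [fhat_image_of_invariant f π (hsupp π hπ)]
  refine ⟨?_, ?_⟩
  · rw [sum_mul_sum_perm_image_subset A q hq1 _ hw _
      fun π S => by rw [Finset.card_image_of_injective _ π.injective]]
    exact Finset.sum_congr rfl fun S _ => hsq S
  · rw [sum_mul_sum_perm_image_subset A q hq1 _ hw _ fun π S => by simp,
      pexp_sq_sub_sq_pexp hp0 hp1]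
    exact Finset.sum_congr rfl fun S _ => hsq S

/-- For a random permutation `Π` drawn from a distribution `q` supported on `Sym(f)`:
the level-`k` Fourier weight of the restriction `f_A` equals
`Σ_{|S|=k} f̂(S)² · Pr(Π(S) ⊆ A)`, and consequently
`Var(f_A) = Σ_{S ≠ ∅} f̂(S)² · Pr(Π(S) ⊆ A)`. -/
theorem stmt3 (n : ℕ) (p : ℝ) (hp0 : 0 < p) (hp1 : p < 1)
    (f : (Fin n → Bool) → ℝ) (A : Finset (Fin n))
    (q : Equiv.Perm (Fin n) → ℝ)
    (hq0 : ∀ π, 0 ≤ q π) (hq1 : ∑ π : Equiv.Perm (Fin n), q π = 1)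
    (hsupp : ∀ π : Equiv.Perm (Fin n), q π ≠ 0 →
      ∀ x : Fin n → Bool, f (fun i => x (π.symm i)) = f x)
    (k : ℕ) (hk : k ≤ n) :
    ((∑ S ∈ univ.filter (fun S : Finset (Fin n) => S.card = k),
        fhat p (restrictAvg p A f) S ^ 2)
      = ∑ S ∈ univ.filter (fun S : Finset (Fin n) => S.card = k),
          fhat p f S ^ 2 *
            (∑ π : Equiv.Perm (Fin n), q π * (if S.image π ⊆ A then (1 : ℝ) else 0)))
    ∧ (pexp p (fun x => restrictAvg p A f x ^ 2) - (pexp p (restrictAvg p A f)) ^ 2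
      = ∑ S ∈ univ.filter (fun S : Finset (Fin n) => S ≠ ∅),
          fhat p f S ^ 2 *
            (∑ π : Equiv.Perm (Fin n), q π * (if S.image π ⊆ A then (1 : ℝ) else 0))) :=
  stmt3_general n p hp0 hp1 f A q hq1 hsupp k
end

section
/- Let n = 2^m − 1, identify [n] with the nonzero elements of F_2^m, and let A correspond to the nonzero elements of a fixed (m−ℓ)-dimensional subspace of F_2^m. If Π is induced by a uniformly random invertible linear transformation in GL(m,2), then for any nonempty S ⊆ [n], Pr(Π(S) ⊆ A ∪ {0}) ≤ 2^{−ℓ·dim(S)}, where dim(S) is the dimension of the smallest linear subspace of F_2^m containing S. -/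
/-!
Let `v` be a basis of `span S`, of length `d`. Then `g(S) ⊆ W` iff `g • v ∈ Wᵈ`. The group
`GL(m, q)` acts transitively on linearly independent `d`-tuples, so the orbit map `g ↦ g • v` has
fibres of equal size (cosets of the stabiliser) and the probability equals the proportion of
linearly independent `d`-tuples of `F_q^m` lying in `W`, namely
`∏_{i<d} (q^(m-ℓ) - q^i) / (q^m - q^i)`, in which every factor is at most `q^(-ℓ)`.
-/

open Finset Module MulAction

namespace MulAction

variable {G X : Type*} [Group G] [MulAction G X] [Fintype G] [DecidableEq X]

theorem card_filter_smul_eq_of_mem_orbit {x y : X} (hy : y ∈ orbit G x) :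
    #{g : G | g • x = y} = #{g : G | g • x = x} := by
  obtain ⟨g₀, rfl⟩ := hy
  exact card_nbij' (g₀⁻¹ * ·) (g₀ * ·) (fun g hg => by simp_all [mul_smul])
    (fun g hg => by simp_all [mul_smul]) (fun g _ => by group) (fun g _ => by group)

theorem card_filter_smul_mem_of_subset_orbit (x : X) {T : Finset X} (hT : ↑T ⊆ orbit G x) :
    #{g : G | g • x ∈ T} = #T * #{g : G | g • x = x} := by
  rw [card_eq_sum_card_fiberwise (s := {g : G | g • x ∈ T}) (t := T) (f := (· • x))
      fun g hg => (mem_filter.mp hg).2,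
    ← smul_eq_mul, ← sum_const]
  refine sum_congr rfl fun y hy => ?_
  rw [filter_filter, ← card_filter_smul_eq_of_mem_orbit (hT hy)]
  congr 1
  ext g
  simp only [mem_filter, mem_univ, true_and, and_iff_right_iff_imp]
  rintro rfl
  exact hy

theorem card_filter_smul_mem_mul_card_orbit (x : X) {T O : Finset X} (hT : ↑T ⊆ orbit G x)
    (hO : ↑O = orbit G x) :
    #{g : G | g • x ∈ T} * #O = #T * Fintype.card G := by
  have hG : #{g : G | g • x ∈ O} = Fintype.card G := by
    rw [filter_true_of_mem fun g _ => by simp [← mem_coe, hO, mem_orbit], card_univ]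
  rw [← hG, card_filter_smul_mem_of_subset_orbit x hT, card_filter_smul_mem_of_subset_orbit x hO.le]
  ring

end MulAction

theorem LinearIndependent.exists_linearEquiv_comp_eq {K V ι : Type*} [Field K] [AddCommGroup V]
    [Module K V] [FiniteDimensional K V] [Finite ι] {v w : ι → V}
    (hv : LinearIndependent K v) (hw : LinearIndependent K w) :
    ∃ e : V ≃ₗ[K] V, e ∘ v = w := by
  let bv := Basis.sumExtend hv
  let bw := Basis.sumExtend hw
  have := Module.Finite.finite_basis bv
  have := Module.Finite.finite_basis bw
  have : Finite (Basis.sumExtendIndex hv) := .of_injective _ (Sum.inr_injective (α := ι))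
  have : Finite (Basis.sumExtendIndex hw) := .of_injective _ (Sum.inr_injective (α := ι))
  have hcard : Nat.card (Basis.sumExtendIndex hv) = Nat.card (Basis.sumExtendIndex hw) := by
    have := Nat.card_congr (bv.indexEquiv bw)
    rw [Nat.card_sum, Nat.card_sum] at this
    omega
  obtain ⟨σ⟩ := Finite.card_eq.mp hcard
  refine ⟨bv.equiv bw (Equiv.sumCongr (Equiv.refl ι) σ), funext fun i => ?_⟩
  have hinl {u : ι → V} (hu : LinearIndependent K u) : Basis.sumExtend hu (Sum.inl i) = u i := by
    rw [Basis.sumExtend, Basis.reindex_apply, Basis.coe_extend]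
    rfl
  rw [Function.comp_apply, ← hinl hv, Basis.equiv_apply]
  exact hinl hw

theorem LinearMap.forall_apply_mem_iff_of_span_eq {R M M' : Type*} [Semiring R]
    [AddCommMonoid M] [AddCommMonoid M'] [Module R M] [Module R M'] (f : M →ₗ[R] M')
    (W : Submodule R M') {s t : Set M} (h : Submodule.span R s = Submodule.span R t) :
    (∀ x ∈ s, f x ∈ W) ↔ ∀ x ∈ t, f x ∈ W := by
  have hcomap (u : Set M) : (∀ x ∈ u, f x ∈ W) ↔ Submodule.span R u ≤ W.comap f := by
    rw [Submodule.span_le]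
    rfl
  rw [hcomap, hcomap, h]

theorem Submodule.card_linearIndependent_eq {K V : Type*} [Field K] [AddCommGroup V] [Module K V]
    (W : Submodule K V) (ι : Type*) :
    Nat.card {s : ι → W // LinearIndependent K s} =
      Nat.card {s : ι → V // LinearIndependent K s ∧ ∀ i, s i ∈ W} :=
  Nat.card_congr
    { toFun s := ⟨fun i => s.1 i, s.2.map' W.subtype W.ker_subtype, fun i => (s.1 i).2⟩
      invFun s := ⟨fun i => ⟨s.1 i, s.2.2 i⟩,
        (LinearMap.linearIndependent_iff W.subtype W.ker_subtype).mp s.2.1⟩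
      left_inv _ := rfl
      right_inv _ := rfl }

theorem Submodule.card_linearIndependent_mul_le {K V : Type*} [Field K] [Fintype K]
    [AddCommGroup V] [Module K V] [Finite V] (W : Submodule K V) (k : ℕ) :
    Nat.card {s : Fin k → W // LinearIndependent K s} *
        Fintype.card K ^ ((finrank K V - finrank K W) * k) ≤
      Nat.card {s : Fin k → V // LinearIndependent K s} := by
  have hWV : finrank K W ≤ finrank K V := Submodule.finrank_le W
  by_cases hk : k ≤ finrank K W
  · rw [card_linearIndependent hk, card_linearIndependent (hk.trans hWV), pow_mul,
      ← Fin.prod_const k, ← prod_mul_distrib]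
    gcongr with i
    rw [Nat.sub_mul, ← pow_add, ← pow_add, Nat.add_sub_cancel' hWV]
    exact Nat.sub_le_sub_left (Nat.pow_le_pow_right Fintype.card_pos (Nat.le_add_right _ _)) _
  · have : IsEmpty {s : Fin k → W // LinearIndependent K s} :=
      ⟨fun s => hk (by simpa using s.2.fintype_card_le_finrank)⟩
    simp

namespace Matrix.GeneralLinearGroup

variable {K n ι : Type*} [Field K] [Fintype n] [DecidableEq n]

theorem smul_eq_comp (g : GL n K) (v : ι → n → K) :
    g • v = (toLin g).toLinearEquiv ∘ v := rfl

theorem mem_orbit_iff_linearIndependent [Finite ι] {v w : ι → n → K}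
    (hv : LinearIndependent K v) : w ∈ orbit (GL n K) v ↔ LinearIndependent K w := by
  rw [mem_orbit_iff]
  constructor
  · rintro ⟨g, rfl⟩
    rw [smul_eq_comp]
    exact hv.map' _ (LinearEquiv.ker _)
  · intro hw
    obtain ⟨e, rfl⟩ := hv.exists_linearEquiv_comp_eq hw
    exact ⟨toLin.symm (.ofLinearEquiv e), by rw [smul_eq_comp]; simp⟩

variable [Fintype K] [DecidableEq K]

open Classical in
theorem card_filter_forall_smul_mem_mul_le (W : Submodule K (n → K)) (S : Set (n → K)) :
    #{g : GL n K | ∀ x ∈ S, g • x ∈ W} *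
        Fintype.card K ^ ((finrank K (n → K) - finrank K W) * finrank K (Submodule.span K S)) ≤
      Fintype.card (GL n K) := by
  set d := finrank K (Submodule.span K S)
  let b := finBasis K (Submodule.span K S)
  let v : Fin d → n → K := (Submodule.span K S).subtype ∘ b
  have hv : LinearIndependent K v := b.linearIndependent.map' _ (Submodule.ker_subtype _)
  have hspan : Submodule.span K (Set.range v) = Submodule.span K S := by
    rw [Set.range_comp, Submodule.span_image, b.span_eq, Submodule.map_subtype_top]
  let T : Finset (Fin d → n → K) := {w | LinearIndependent K w ∧ ∀ i, w i ∈ W}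
  let O : Finset (Fin d → n → K) := {w | LinearIndependent K w}
  have hO : ↑O = orbit (GL n K) v := by
    ext w
    simp [O, mem_orbit_iff_linearIndependent hv]
  have hT : ↑T ⊆ orbit (GL n K) v :=
    hO ▸ coe_subset.mpr (monotone_filter_right _ fun _ _ => And.left)
  have hfilter : #{g : GL n K | ∀ x ∈ S, g • x ∈ W} = #{g : GL n K | g • v ∈ T} := by
    congr 1
    ext g
    have hgv : LinearIndependent K (g • v) :=
      (mem_orbit_iff_linearIndependent hv).mp (mem_orbit v g)
    simp only [T, mem_filter, mem_univ, true_and, hgv, Pi.smul_apply]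
    exact ((mulVecLin (g : Matrix n n K)).forall_apply_mem_iff_of_span_eq W hspan.symm).trans
      Set.forall_mem_range
  have hTO : #T * Fintype.card K ^ ((finrank K (n → K) - finrank K W) * d) ≤ #O := by
    have := W.card_linearIndependent_mul_le d
    rwa [W.card_linearIndependent_eq, Nat.card_eq_fintype_card, Nat.card_eq_fintype_card,
      Fintype.card_subtype, Fintype.card_subtype] at this
  have hO_pos : 0 < #O := card_pos.mpr ⟨v, by simpa [O] using hv⟩
  refine Nat.le_of_mul_le_mul_right ?_ hO_pos
  calc #{g : GL n K | ∀ x ∈ S, g • x ∈ W} * _ * #O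
      = #T * Fintype.card K ^ ((finrank K (n → K) - finrank K W) * d) * Fintype.card (GL n K) := by
        rw [hfilter, mul_right_comm, card_filter_smul_mem_mul_card_orbit v hT hO, mul_right_comm]
    _ ≤ #O * Fintype.card (GL n K) := Nat.mul_le_mul_right _ hTO
    _ = Fintype.card (GL n K) * #O := mul_comm _ _

end Matrix.GeneralLinearGroup

open Classical in
theorem stmt6_general (m ℓ : ℕ) (hl : ℓ ≤ m)
    (W : Submodule (ZMod 2) (Fin m → ZMod 2))
    (hW : Module.finrank (ZMod 2) W = m - ℓ)
    (S : Finset (Fin m → ZMod 2)) :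
    ((univ.filter (fun g : Matrix.GeneralLinearGroup (Fin m) (ZMod 2) =>
          ∀ x ∈ S, (g : Matrix (Fin m) (Fin m) (ZMod 2)).mulVec x ∈ W)).card : ℝ)
        / (Fintype.card (Matrix.GeneralLinearGroup (Fin m) (ZMod 2)) : ℝ)
      ≤ (2 : ℝ) ^
          (-((ℓ * Module.finrank (ZMod 2)
              (Submodule.span (ZMod 2) (S : Set (Fin m → ZMod 2)))) : ℤ)) := by
  have key :=
    Matrix.GeneralLinearGroup.card_filter_forall_smul_mem_mul_le W (S : Set (Fin m → ZMod 2))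
  rw [ZMod.card, finrank_fin_fun, hW, Nat.sub_sub_self hl] at key
  rw [zpow_neg, ← Nat.cast_mul, zpow_natCast, div_le_iff₀ (by positivity), inv_mul_eq_div,
    le_div_iff₀ (by positivity)]
  exact_mod_cast key

open Classical in
/-- Let `A ∪ {0}` be a fixed `(m−ℓ)`-dimensional subspace `W` of `F_2^m` and let `S` be a
nonempty set of nonzero vectors. For a uniformly random `g ∈ GL(m,2)`,
`Pr(g(S) ⊆ W) ≤ 2^{−ℓ·dim(S)}`, where `dim(S)` is the dimension of the span of `S`. -/
theorem stmt6 (m ℓ : ℕ) (hl : ℓ ≤ m)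
    (W : Submodule (ZMod 2) (Fin m → ZMod 2))
    (hW : Module.finrank (ZMod 2) W = m - ℓ)
    (S : Finset (Fin m → ZMod 2)) (hS : S.Nonempty)
    (h0 : (0 : Fin m → ZMod 2) ∉ S) :
    ((univ.filter (fun g : Matrix.GeneralLinearGroup (Fin m) (ZMod 2) =>
          ∀ x ∈ S, (g : Matrix (Fin m) (Fin m) (ZMod 2)).mulVec x ∈ W)).card : ℝ)
        / (Fintype.card (Matrix.GeneralLinearGroup (Fin m) (ZMod 2)) : ℝ)
      ≤ (2 : ℝ) ^
          (-((ℓ * Module.finrank (ZMod 2)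
              (Submodule.span (ZMod 2) (S : Set (Fin m → ZMod 2)))) : ℤ)) :=
  stmt6_general m ℓ hl W hW S
end

section
/- Let f : {0,1}^n → {0,1} be a boolean function, let X have i.i.d. Bernoulli(p) coordinates, let α = E[f(X)] and λ = min{p, 1−p}. Then for any ε ∈ (0,1), the sum over S ⊆ [n] with |S| ≤ (1−ε)·ln(α)/ln(λ) of f̂(S)² is at most α^{2ε/(1+λ)}. In particular, taking ε = 7/8, the sum over S with |S| ≤ (1/8)·ln(α)/ln(λ) of f̂(S)² is at most α^{7/6}. -/
open Finset

/-!
The noise operator `T_c f (y) = E_x[f x · K_c(x, y)]`, with kernel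
`K_c(x, y) = ∏ᵢ (1 + c χ(xᵢ) χ(yᵢ)) = ∑_S c^|S| χ_S(x) χ_S(y)`, satisfies
`E[(T_c f)²] = ∑_S c^(2|S|) f̂(S)²` because `K_c ∘ K_c = K_(c²)`. Hypercontractivity
`‖T_c f‖₂ ≤ ‖f‖_q` for `q = 1 + λ` and `c² = ρ = λ^(2/q)` tensorizes, by Minkowski's inequality in
`L^(2/q)`, from the same inequality on a single biased bit; there it reduces to the convexity of
an explicit function of one real variable. For boolean `f` we have `‖f‖_q^q = α`, so
`∑_{|S| ≤ K} f̂(S)² ≤ ρ^(-K) ∑_S ρ^|S| f̂(S)² ≤ ρ^(-K) α^(2/q)`, and `K = (1 - ε) log α / log λ`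
turns the right-hand side into `α^(2ε/q)`.
-/

namespace BiasedLevelK

variable {p : ℝ} {n : ℕ}

noncomputable def bitWeight (p : ℝ) (b : Bool) : ℝ := if b then p else 1 - p

noncomputable def bitChar (p : ℝ) (b : Bool) : ℝ :=
  if b then -Real.sqrt ((1 - p) / p) else Real.sqrt (p / (1 - p))

lemma bitWeight_pos (hp0 : 0 < p) (hp1 : p < 1) (b : Bool) : 0 < bitWeight p b := by
  cases b <;> simp [bitWeight] <;> linarith

lemma sum_bitWeight : ∑ b, bitWeight p b = 1 := by simp [bitWeight]

lemma bitChar_true (hp0 : 0 < p) :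
    bitChar p true = -Real.sqrt (p * (1 - p)) / p := by
  rw [bitChar, if_pos rfl, neg_div, ← Real.sqrt_sq hp0.le, ← Real.sqrt_div' _ (sq_nonneg p),
    Real.sqrt_sq hp0.le]
  congr 2
  field_simp

lemma bitChar_false (hp0 : 0 < p) (hp1 : p < 1) :
    bitChar p false = Real.sqrt (p * (1 - p)) / (1 - p) := by
  have h1p : 0 < 1 - p := by linarith
  rw [bitChar, if_neg Bool.false_ne_true, ← Real.sqrt_sq h1p.le, ← Real.sqrt_div' _ (sq_nonneg _),
    Real.sqrt_sq h1p.le]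
  congr 1
  field_simp

/-- The functions `1` and `bitChar p` form an orthonormal basis of `L²(Bernoulli(p))`. -/
lemma sum_bitWeight_mul_add_mul (hp0 : 0 < p) (hp1 : p < 1) (a c a' c' : ℝ) :
    ∑ b, bitWeight p b * ((a + c * bitChar p b) * (a' + c' * bitChar p b)) = a * a' + c * c' := by
  have h1p : 0 < 1 - p := by linarith
  have hs : Real.sqrt (p * (1 - p)) ^ 2 = p * (1 - p) := Real.sq_sqrt (by positivity)
  simp only [Fintype.sum_bool, bitWeight, bitChar_true hp0, bitChar_false hp0 hp1, if_true,
    Bool.false_eq_true, if_false]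
  field_simp
  linear_combination c * c' * hs

lemma bitChar_expansion (hp0 : 0 < p) (hp1 : p < 1) (g : Bool → ℝ) (b : Bool) :
    g b = ∑ b', bitWeight p b' * g b' +
      bitChar p b * ∑ b', bitWeight p b' * bitChar p b' * g b' := by
  have h1p : 0 < 1 - p := by linarith
  have hs : Real.sqrt (p * (1 - p)) ^ 2 = p * (1 - p) := Real.sq_sqrt (by positivity)
  cases b <;> simp only [Fintype.sum_bool, bitWeight, bitChar_true hp0, bitChar_false hp0 hp1,
    if_true, Bool.false_eq_true, if_false] <;> field_simp
  · linear_combination (g true - g false) * hs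
  · linear_combination (g false - g true) * hs

lemma wt_cons (b : Bool) (y : Fin n → Bool) :
    wt p (Fin.cons b y : Fin (n + 1) → Bool) = bitWeight p b * wt p y := by
  simp [wt, Fin.prod_univ_succ, bitWeight]

lemma wt_pos (hp0 : 0 < p) (hp1 : p < 1) (x : Fin n → Bool) : 0 < wt p x :=
  prod_pos fun i _ => bitWeight_pos hp0 hp1 (x i)

lemma pexp_zero (g : (Fin 0 → Bool) → ℝ) (x : Fin 0 → Bool) : pexp p g = g x := by
  simp [pexp, wt, Subsingleton.elim _ x]

lemma pexp_succ (g : (Fin (n + 1) → Bool) → ℝ) :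
    pexp p g = ∑ b, bitWeight p b * pexp p fun y => g (Fin.cons b y) := by
  simp only [pexp, mul_sum, ← (Fin.consEquiv fun _ => Bool).sum_comp, Fintype.sum_prod_type]
  simp [Fin.consEquiv, wt_cons, mul_assoc]

lemma pexp_add (g h : (Fin n → Bool) → ℝ) :
    pexp p (fun x => g x + h x) = pexp p g + pexp p h := by
  simp only [pexp, mul_add, sum_add_distrib]

lemma pexp_const_mul (c : ℝ) (g : (Fin n → Bool) → ℝ) :
    pexp p (fun x => c * g x) = c * pexp p g := by
  simp only [pexp, mul_sum]
  exact sum_congr rfl fun x _ => by ring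

lemma pexp_mul_const (g : (Fin n → Bool) → ℝ) (c : ℝ) :
    pexp p (fun x => g x * c) = pexp p g * c := by
  simp only [pexp, sum_mul, mul_assoc]

lemma pexp_mono (hp0 : 0 < p) (hp1 : p < 1) {g h : (Fin n → Bool) → ℝ} (hgh : ∀ x, g x ≤ h x) :
    pexp p g ≤ pexp p h :=
  sum_le_sum fun x _ => mul_le_mul_of_nonneg_left (hgh x) (wt_pos hp0 hp1 x).le

lemma pexp_nonneg (hp0 : 0 < p) (hp1 : p < 1) {g : (Fin n → Bool) → ℝ} (hg : ∀ x, 0 ≤ g x) :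
    0 ≤ pexp p g :=
  sum_nonneg fun x _ => mul_nonneg (wt_pos hp0 hp1 x).le (hg x)

lemma pexp_one : ∀ {n : ℕ}, pexp p (fun _ : Fin n → Bool => 1) = 1
  | 0 => pexp_zero _ Fin.elim0
  | n + 1 => by simp only [pexp_succ (n := n), pexp_one, mul_one, sum_bitWeight]

lemma chi_eq_prod (S : Finset (Fin n)) (x : Fin n → Bool) :
    chi p S x = ∏ i ∈ S, bitChar p (x i) := rfl

noncomputable def noiseKernel (p c : ℝ) {n : ℕ} (x y : Fin n → Bool) : ℝ :=
  ∏ i, (1 + c * bitChar p (x i) * bitChar p (y i))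

lemma noiseKernel_cons (c : ℝ) (b b' : Bool) (y y' : Fin n → Bool) :
    noiseKernel p c (Fin.cons b y : Fin (n + 1) → Bool) (Fin.cons b' y') =
      (1 + c * bitChar p b * bitChar p b') * noiseKernel p c y y' := by
  simp [noiseKernel, Fin.prod_univ_succ]

lemma noiseKernel_comm (c : ℝ) (x y : Fin n → Bool) :
    noiseKernel p c x y = noiseKernel p c y x := by
  simp only [noiseKernel, mul_right_comm c (bitChar p (x _)), mul_assoc c]

lemma noiseKernel_eq_sum (c : ℝ) (x y : Fin n → Bool) :
    noiseKernel p c x y = ∑ S : Finset (Fin n), c ^ S.card * (chi p S x * chi p S y) := by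
  simp only [noiseKernel, add_comm (1 : ℝ), prod_add, prod_const_one, mul_one, powerset_univ,
    prod_mul_distrib, prod_const, chi_eq_prod, mul_assoc]

lemma pexp_noiseKernel_mul_noiseKernel (hp0 : 0 < p) (hp1 : p < 1) (c : ℝ) :
    ∀ {n : ℕ} (x z : Fin n → Bool),
      pexp p (fun y => noiseKernel p c x y * noiseKernel p c y z) = noiseKernel p (c ^ 2) x z
  | 0, x, z => by simp [pexp_zero _ x, noiseKernel]
  | n + 1, x, z => by
    rw [← Fin.cons_self_tail x, ← Fin.cons_self_tail z, pexp_succ, noiseKernel_cons]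
    have h := sum_bitWeight_mul_add_mul hp0 hp1 1 (c * bitChar p (x 0)) 1 (c * bitChar p (z 0))
    have hfactor : ∀ b, (pexp p fun y =>
        (1 + c * bitChar p (x 0) * bitChar p b) * noiseKernel p c (Fin.tail x) y *
          ((1 + c * bitChar p b * bitChar p (z 0)) * noiseKernel p c y (Fin.tail z))) =
        noiseKernel p (c ^ 2) (Fin.tail x) (Fin.tail z) *
          ((1 + c * bitChar p (x 0) * bitChar p b) * (1 + c * bitChar p (z 0) * bitChar p b)) :=
        fun b => by
      rw [← pexp_noiseKernel_mul_noiseKernel hp0 hp1 c, ← pexp_mul_const]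
      congr 1; funext y; ring
    simp only [noiseKernel_cons, hfactor]
    rw [Fintype.sum_bool] at h ⊢
    linear_combination noiseKernel p (c ^ 2) (Fin.tail x) (Fin.tail z) * h

lemma sum_pow_card_mul_fhat_sq (c : ℝ) (f : (Fin n → Bool) → ℝ) :
    ∑ S, c ^ S.card * fhat p f S ^ 2 =
      pexp p (fun x => pexp p fun z => f x * f z * noiseKernel p c x z) := by
  calc ∑ S, c ^ S.card * fhat p f S ^ 2
      = ∑ S, ∑ x, ∑ z,
          wt p x * (wt p z * (f x * f z * (c ^ S.card * (chi p S x * chi p S z)))) :=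
        sum_congr rfl fun S _ => by
          rw [fhat, pexp, sq, sum_mul_sum]
          simp only [mul_sum]
          exact sum_congr rfl fun x _ => sum_congr rfl fun z _ => by ring
    _ = ∑ x, ∑ z, ∑ S,
          wt p x * (wt p z * (f x * f z * (c ^ S.card * (chi p S x * chi p S z)))) := by
        rw [sum_comm]
        exact sum_congr rfl fun x _ => sum_comm
    _ = _ := by simp only [pexp, noiseKernel_eq_sum, mul_sum]

noncomputable def noiseOp (p c : ℝ) {n : ℕ} (f : (Fin n → Bool) → ℝ) (y : Fin n → Bool) : ℝ :=
  pexp p fun x => f x * noiseKernel p c x y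

lemma pexp_noiseOp_sq (hp0 : 0 < p) (hp1 : p < 1) (c : ℝ) (f : (Fin n → Bool) → ℝ) :
    pexp p (fun y => noiseOp p c f y ^ 2) =
      pexp p (fun x => pexp p fun z => f x * f z * noiseKernel p (c ^ 2) x z) := by
  calc pexp p (fun y => noiseOp p c f y ^ 2)
      = ∑ y, ∑ x, ∑ z, wt p x * (wt p z * (f x * f z *
          (wt p y * (noiseKernel p c x y * noiseKernel p c y z)))) :=
        sum_congr rfl fun y _ => by
          simp only [noiseOp, pexp]
          rw [sq, sum_mul_sum]
          simp only [mul_sum]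
          refine sum_congr rfl fun x _ => sum_congr rfl fun z _ => ?_
          rw [noiseKernel_comm c z y]
          ring
    _ = ∑ x, ∑ z, ∑ y, wt p x * (wt p z * (f x * f z *
          (wt p y * (noiseKernel p c x y * noiseKernel p c y z)))) := by
        rw [sum_comm]
        exact sum_congr rfl fun x _ => sum_comm
    _ = _ := by
        simp only [← pexp_noiseKernel_mul_noiseKernel hp0 hp1 c, pexp, mul_sum]

noncomputable def headMean (p : ℝ) {n : ℕ} (f : (Fin (n + 1) → Bool) → ℝ) (y : Fin n → Bool) :
    ℝ :=
  ∑ b, bitWeight p b * f (Fin.cons b y)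

noncomputable def headCoeff (p : ℝ) {n : ℕ} (f : (Fin (n + 1) → Bool) → ℝ) (y : Fin n → Bool) :
    ℝ :=
  ∑ b, bitWeight p b * bitChar p b * f (Fin.cons b y)

lemma noiseOp_cons (c : ℝ) (f : (Fin (n + 1) → Bool) → ℝ) (b : Bool) (y : Fin n → Bool) :
    noiseOp p c f (Fin.cons b y) =
      noiseOp p c (headMean p f) y + c * bitChar p b * noiseOp p c (headCoeff p f) y := by
  simp only [noiseOp, pexp_succ, noiseKernel_cons, headMean, headCoeff, Fintype.sum_bool]
  simp only [pexp, mul_sum, ← sum_add_distrib]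
  exact sum_congr rfl fun y' _ => by ring

lemma noiseOp_comp_cons (hp0 : 0 < p) (hp1 : p < 1) (c : ℝ) (f : (Fin (n + 1) → Bool) → ℝ)
    (b : Bool) (y : Fin n → Bool) :
    noiseOp p c (fun y' => f (Fin.cons b y')) y =
      noiseOp p c (headMean p f) y + bitChar p b * noiseOp p c (headCoeff p f) y := by
  simp only [noiseOp, ← pexp_const_mul, ← pexp_add]
  congr 1
  funext y'
  rw [bitChar_expansion hp0 hp1 (fun b => f (Fin.cons b y')) b, headMean, headCoeff]
  ring

/-- Minkowski's inequality in weighted `ℓ^r`. -/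
lemma sum_mul_add_rpow_le {ι : Type*} [Fintype ι] {r : ℝ} (hr : 1 ≤ r) {w g h : ι → ℝ}
    (hw : ∀ i, 0 ≤ w i) (hg : ∀ i, 0 ≤ g i) (hh : ∀ i, 0 ≤ h i) {a b : ℝ} (ha : 0 ≤ a)
    (hb : 0 ≤ b) :
    ∑ i, w i * (a * g i + b * h i) ^ r ≤
      (a * (∑ i, w i * g i ^ r) ^ (1 / r) + b * (∑ i, w i * h i ^ r) ^ (1 / r)) ^ r := by
  have hr0 : 0 < r := by linarith
  have hsum : ∀ k : ι → ℝ, (∀ i, 0 ≤ k i) → 0 ≤ ∑ i, w i * k i ^ r := fun k hk =>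
    sum_nonneg fun i _ => mul_nonneg (hw i) (Real.rpow_nonneg (hk i) _)
  have hgh : ∀ i, 0 ≤ a * g i + b * h i := fun i =>
    add_nonneg (mul_nonneg ha (hg i)) (mul_nonneg hb (hh i))
  have hscale : ∀ (c : ℝ) (k : ι → ℝ), 0 ≤ c → (∀ i, 0 ≤ k i) →
      ∑ i, (w i ^ (1 / r) * (c * k i)) ^ r = c ^ r * ∑ i, w i * k i ^ r := fun c k hc hk => by
    rw [mul_sum]
    refine sum_congr rfl fun i _ => ?_
    rw [Real.mul_rpow (Real.rpow_nonneg (hw i) _) (mul_nonneg hc (hk i)),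
      Real.mul_rpow hc (hk i), ← Real.rpow_mul (hw i), one_div_mul_cancel hr0.ne',
      Real.rpow_one]
    ring
  have hroot : ∀ (c : ℝ) (k : ι → ℝ), 0 ≤ c → (∀ i, 0 ≤ k i) →
      (c ^ r * ∑ i, w i * k i ^ r) ^ (1 / r) = c * (∑ i, w i * k i ^ r) ^ (1 / r) :=
    fun c k hc hk => by
      rw [Real.mul_rpow (Real.rpow_nonneg hc _) (hsum k hk), ← Real.rpow_mul hc,
        mul_one_div_cancel hr0.ne', Real.rpow_one]
  have hminkowski := Real.Lp_add_le_of_nonneg (s := univ) hr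
    (f := fun i => w i ^ (1 / r) * (a * g i)) (g := fun i => w i ^ (1 / r) * (b * h i))
    (fun i _ => by have := hg i; have := hw i; positivity)
    (fun i _ => by have := hh i; have := hw i; positivity)
  have hlhs := hscale 1 (fun i => a * g i + b * h i) zero_le_one hgh
  simp only [Real.one_rpow, one_mul, ← mul_add] at hlhs hminkowski
  rw [hlhs, hscale a g ha hg, hscale b h hb hh, hroot a g ha hg, hroot b h hb hh] at hminkowski
  calc ∑ i, w i * (a * g i + b * h i) ^ r
      = ((∑ i, w i * (a * g i + b * h i) ^ r) ^ (1 / r)) ^ r := by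
        rw [← Real.rpow_mul (hsum _ hgh), one_div_mul_cancel hr0.ne', Real.rpow_one]
    _ ≤ _ := Real.rpow_le_rpow (Real.rpow_nonneg (hsum _ hgh) _) hminkowski hr0.le

lemma pexp_noiseOp_sq_succ (hp0 : 0 < p) (hp1 : p < 1) (c : ℝ) (f : (Fin (n + 1) → Bool) → ℝ) :
    pexp p (fun x => noiseOp p c f x ^ 2) = pexp p fun y =>
      noiseOp p c (headMean p f) y ^ 2 + c ^ 2 * noiseOp p c (headCoeff p f) y ^ 2 := by
  rw [pexp_succ]
  simp only [noiseOp_cons, pexp, mul_sum]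
  rw [sum_comm]
  refine sum_congr rfl fun y _ => ?_
  have h := sum_bitWeight_mul_add_mul hp0 hp1 (noiseOp p c (headMean p f) y)
    (c * noiseOp p c (headCoeff p f) y) (noiseOp p c (headMean p f) y)
    (c * noiseOp p c (headCoeff p f) y)
  rw [Fintype.sum_bool] at h ⊢
  linear_combination wt p y * h

/-- Hypercontractivity tensorizes: the two-point inequality for one biased bit gives
`‖T_c f‖₂ ≤ ‖f‖_q` on the whole cube. -/
theorem pexp_noiseOp_sq_le (hp0 : 0 < p) (hp1 : p < 1) {q c : ℝ} (hq0 : 0 < q) (hq2 : q ≤ 2)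
    (htwo : ∀ a b : ℝ,
      a ^ 2 + c ^ 2 * b ^ 2 ≤ (∑ β, bitWeight p β * |a + bitChar p β * b| ^ q) ^ (2 / q)) :
    ∀ {n : ℕ} (f : (Fin n → Bool) → ℝ),
      pexp p (fun y => noiseOp p c f y ^ 2) ≤ pexp p (fun x => |f x| ^ q) ^ (2 / q) := by
  have hr : 1 ≤ 2 / q := by rw [le_div_iff₀ hq0]; linarith
  have hr0 : 0 < 2 / q := by positivity
  have hcollapse : ∀ t : ℝ, (|t| ^ q) ^ (2 / q) = t ^ 2 := fun t => by
    rw [← Real.rpow_mul (abs_nonneg t), mul_div_cancel₀ 2 hq0.ne', Real.rpow_two, sq_abs]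
  have hqnorm_nonneg : ∀ {m : ℕ} (g : (Fin m → Bool) → ℝ), 0 ≤ pexp p (fun x => |g x| ^ q) :=
    fun g => pexp_nonneg hp0 hp1 fun x => Real.rpow_nonneg (abs_nonneg _) _
  intro n
  induction n with
  | zero =>
    intro f
    rw [pexp_zero _ Fin.elim0, pexp_zero _ Fin.elim0, hcollapse]
    simp [noiseOp, pexp_zero _ Fin.elim0, noiseKernel]
  | succ m ih =>
    intro f
    set G : Bool → (Fin m → Bool) → ℝ :=
      fun b y => |noiseOp p c (fun y' => f (Fin.cons b y')) y| ^ q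
    have hG : ∀ b y, 0 ≤ G b y := fun b y => Real.rpow_nonneg (abs_nonneg _) _
    have hGr : ∀ b, 0 ≤ pexp p fun y => G b y ^ (2 / q) := fun b =>
      pexp_nonneg hp0 hp1 fun y => Real.rpow_nonneg (hG b y) _
    have hμ : ∀ b, 0 ≤ bitWeight p b := fun b => (bitWeight_pos hp0 hp1 b).le
    have hpointwise : ∀ y,
        noiseOp p c (headMean p f) y ^ 2 + c ^ 2 * noiseOp p c (headCoeff p f) y ^ 2 ≤
          (bitWeight p true * G true y + bitWeight p false * G false y) ^ (2 / q) := fun y => by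
      simpa only [G, noiseOp_comp_cons hp0 hp1, Fintype.sum_bool] using htwo _ _
    have hroot : ∀ b, (pexp p fun y => G b y ^ (2 / q)) ^ (1 / (2 / q)) ≤
        pexp p (fun y => |f (Fin.cons b y)| ^ q) := fun b => by
      simp only [G, hcollapse]
      calc _ ≤ (pexp p (fun y => |f (Fin.cons b y)| ^ q) ^ (2 / q)) ^ (1 / (2 / q)) :=
            Real.rpow_le_rpow (pexp_nonneg hp0 hp1 fun y => sq_nonneg _) (ih _) (by positivity)
        _ = _ := by
            rw [← Real.rpow_mul (hqnorm_nonneg _), mul_one_div_cancel hr0.ne', Real.rpow_one]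
    calc pexp p (fun x => noiseOp p c f x ^ 2)
        ≤ pexp p fun y =>
            (bitWeight p true * G true y + bitWeight p false * G false y) ^ (2 / q) := by
          rw [pexp_noiseOp_sq_succ hp0 hp1]
          exact pexp_mono hp0 hp1 hpointwise
      _ ≤ (bitWeight p true * (pexp p fun y => G true y ^ (2 / q)) ^ (1 / (2 / q)) +
            bitWeight p false * (pexp p fun y => G false y ^ (2 / q)) ^ (1 / (2 / q))) ^ (2 / q) :=
          sum_mul_add_rpow_le hr (fun y => (wt_pos hp0 hp1 y).le) (hG true) (hG false)
            (hμ true) (hμ false)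
      _ ≤ (bitWeight p true * pexp p (fun y => |f (Fin.cons true y)| ^ q) +
            bitWeight p false * pexp p (fun y => |f (Fin.cons false y)| ^ q)) ^ (2 / q) := by
          refine Real.rpow_le_rpow ?_ (add_le_add (mul_le_mul_of_nonneg_left (hroot true) (hμ _))
            (mul_le_mul_of_nonneg_left (hroot false) (hμ _))) hr0.le
          exact add_nonneg (mul_nonneg (hμ _) (Real.rpow_nonneg (hGr _) _))
            (mul_nonneg (hμ _) (Real.rpow_nonneg (hGr _) _))
      _ = pexp p (fun x => |f x| ^ q) ^ (2 / q) := by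
          rw [pexp_succ (fun x => |f x| ^ q), Fintype.sum_bool]

lemma div_rpow_one_sub_two_mul_le (hp0 : 0 < p) (hp2 : p ≤ 1 / 2) :
    ((1 - p) / p) ^ (1 - 2 * p) ≤ p ^ (-1 / (1 + p)) := by
  have h1p : 0 < 1 - p := by linarith
  rw [Real.rpow_def_of_pos (by positivity), Real.rpow_def_of_pos hp0, Real.exp_le_exp,
    Real.log_div h1p.ne' hp0.ne', mul_div_assoc', le_div_iff₀ (by linarith)]
  have hlp : Real.log p ≤ 0 := Real.log_nonpos hp0.le (by linarith)
  have hl1p : Real.log (1 - p) ≤ 0 := Real.log_nonpos h1p.le (by linarith)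
  nlinarith [mul_nonneg (mul_nonneg (by linarith : (0 : ℝ) ≤ 1 + p)
      (by linarith : (0 : ℝ) ≤ 1 - 2 * p)) (neg_nonneg.2 hl1p),
    mul_nonneg (by nlinarith : (0 : ℝ) ≤ p * (1 + 2 * p)) (neg_nonneg.2 hlp)]

/-- Lower bound for the second derivative of the two-point moment function below. -/
lemma rpow_le_mul_rpow_add_mul_rpow (hp0 : 0 < p) (hp2 : p ≤ 1 / 2) {u v : ℝ} (hu : 0 < u)
    (hv : 0 < v) (huv : p * u + (1 - p) * v = 1) :
    p ^ ((1 - p) / (1 + p)) ≤ (1 - p) * u ^ (p - 1) + p * v ^ (p - 1) := by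
  have h1p : 0 < 1 - p := by linarith
  have hR : 0 < (1 - p) / p := by positivity
  have hamgm :
      (u ^ (p - 1)) ^ (1 - p) * (v ^ (p - 1)) ^ p ≤ (1 - p) * u ^ (p - 1) + p * v ^ (p - 1) :=
    Real.geom_mean_le_arith_mean2_weighted h1p.le hp0.le (by positivity) (by positivity) (by ring)
  have hgeom : u ^ (1 - p) * v ^ p ≤ ((1 - p) / p) ^ (1 - 2 * p) := by
    have h := Real.geom_mean_le_arith_mean2_weighted h1p.le hp0.le
      (by positivity : 0 ≤ p / (1 - p) * u) (by positivity : 0 ≤ (1 - p) / p * v) (by ring)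
    rw [show (1 - p) * (p / (1 - p) * u) + p * ((1 - p) / p * v) = 1 by
        field_simp; linear_combination huv,
      Real.mul_rpow (by positivity) hu.le, Real.mul_rpow (by positivity) hv.le,
      ← inv_div, Real.inv_rpow hR.le, ← Real.rpow_neg hR.le] at h
    have hsplit : u ^ (1 - p) * v ^ p = ((1 - p) / p) ^ (1 - 2 * p) *
        (((1 - p) / p) ^ (-(1 - p)) * u ^ (1 - p) * (((1 - p) / p) ^ p * v ^ p)) := by
      rw [show ((1 - p) / p) ^ (-(1 - p)) * u ^ (1 - p) * (((1 - p) / p) ^ p * v ^ p) =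
          (((1 - p) / p) ^ (-(1 - p)) * ((1 - p) / p) ^ p) * (u ^ (1 - p) * v ^ p) by ring,
        ← mul_assoc, ← Real.rpow_add hR, ← Real.rpow_add hR,
        show 1 - 2 * p + (-(1 - p) + p) = 0 by ring, Real.rpow_zero, one_mul]
    rw [hsplit]
    exact mul_le_of_le_one_right (by positivity) h
  calc p ^ ((1 - p) / (1 + p)) = (p ^ (-1 / (1 + p))) ^ (p - 1) := by
        rw [← Real.rpow_mul hp0.le]; congr 1; field_simp; ring
    _ ≤ (((1 - p) / p) ^ (1 - 2 * p)) ^ (p - 1) :=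
        Real.rpow_le_rpow_of_nonpos (by positivity) (div_rpow_one_sub_two_mul_le hp0 hp2)
          (by linarith)
    _ ≤ (u ^ (1 - p) * v ^ p) ^ (p - 1) :=
        Real.rpow_le_rpow_of_nonpos (by positivity) hgeom (by linarith)
    _ = (u ^ (p - 1)) ^ (1 - p) * (v ^ (p - 1)) ^ p := by
        rw [Real.mul_rpow (by positivity) (by positivity), ← Real.rpow_mul hu.le,
          ← Real.rpow_mul hv.le, ← Real.rpow_mul hu.le, ← Real.rpow_mul hv.le, mul_comm (1 - p),
          mul_comm p]
    _ ≤ _ := hamgm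

lemma one_add_mul_sq_le_moment (hp0 : 0 < p) (hp2 : p ≤ 1 / 2) {d : ℝ}
    (hd1 : 0 ≤ 1 + (1 - p) * d) (hd2 : 0 ≤ 1 - p * d) :
    1 + (1 + p) / 2 * p ^ (2 / (1 + p)) * (p * (1 - p)) * d ^ 2 ≤
      p * (1 + (1 - p) * d) ^ (1 + p) + (1 - p) * (1 - p * d) ^ (1 + p) := by
  have h1p : 0 < 1 - p := by linarith
  set κ := (1 + p) / 2 * p ^ (2 / (1 + p)) * (p * (1 - p))
  set F : ℝ → ℝ := fun t =>
    p * (1 + (1 - p) * t) ^ (1 + p) + (1 - p) * (1 - p * t) ^ (1 + p) - κ * t ^ 2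
  set F' : ℝ → ℝ := fun t =>
    p * (1 - p) * (1 + p) * ((1 + (1 - p) * t) ^ p - (1 - p * t) ^ p) - 2 * κ * t
  set F'' : ℝ → ℝ := fun t =>
    p * (1 - p) * (1 + p) *
      (p * (1 - p) * (1 + (1 - p) * t) ^ (p - 1) + p * p * (1 - p * t) ^ (p - 1)) - 2 * κ
  set D := Set.Icc (-(1 - p)⁻¹) p⁻¹
  have hint : ∀ t ∈ interior D, 0 < 1 + (1 - p) * t ∧ 0 < 1 - p * t := fun t ht => by
    rw [interior_Icc] at ht
    have h1 := mul_lt_mul_of_pos_left ht.1 h1p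
    have h2 := mul_lt_mul_of_pos_left ht.2 hp0
    rw [mul_neg, mul_inv_cancel₀ h1p.ne'] at h1
    rw [mul_inv_cancel₀ hp0.ne'] at h2
    constructor <;> linarith
  have hu : ∀ t, HasDerivAt (fun s => 1 + (1 - p) * s) (1 - p) t := fun t => by
    simpa using ((hasDerivAt_id t).const_mul (1 - p)).const_add 1
  have hv : ∀ t, HasDerivAt (fun s => 1 - p * s) (-p) t := fun t => by
    simpa using ((hasDerivAt_id t).const_mul p).const_sub 1
  have hF : ∀ t, HasDerivAt F (F' t) t := fun t => by
    refine (((((hu t).rpow_const (p := 1 + p) (Or.inr (by linarith))).const_mul p).add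
      (((hv t).rpow_const (p := 1 + p) (Or.inr (by linarith))).const_mul (1 - p))).sub
      ((hasDerivAt_pow 2 t).const_mul κ)).congr_deriv ?_
    simp only [F', add_sub_cancel_left]
    ring
  have hF' : ∀ t ∈ interior D, HasDerivAt F' (F'' t) t := fun t ht => by
    refine (((((hu t).rpow_const (p := p) (Or.inl (hint t ht).1.ne')).sub
      ((hv t).rpow_const (p := p) (Or.inl (hint t ht).2.ne'))).const_mul
      (p * (1 - p) * (1 + p))).sub ((hasDerivAt_id t).const_mul (2 * κ))).congr_deriv ?_
    simp only [F'']
    ring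
  have hF'' : ∀ t ∈ interior D, 0 ≤ F'' t := fun t ht => by
    have hG := rpow_le_mul_rpow_add_mul_rpow hp0 hp2 (hint t ht).1 (hint t ht).2 (by ring)
    have hsplit : p * p ^ ((1 - p) / (1 + p)) = p ^ (2 / (1 + p)) := by
      rw [← Real.rpow_one_add' hp0.le (by positivity)]
      congr 1; field_simp; ring
    have := mul_le_mul_of_nonneg_left hG (by positivity : 0 ≤ p * (p * (1 - p) * (1 + p)))
    simp only [F'', κ]
    rw [← hsplit]
    linear_combination this
  have hconvex : ConvexOn ℝ D F := convexOn_of_hasDerivWithinAt2_nonneg (convex_Icc _ _)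
    (fun t _ => (hF t).continuousAt.continuousWithinAt)
    (fun t _ => (hF t).hasDerivWithinAt) (fun t ht => (hF' t ht).hasDerivWithinAt) hF''
  have hmin : IsMinOn F D 0 := by
    refine hconvex.isMinOn_of_rightDeriv_eq_zero ?_ ?_
    · rw [interior_Icc]
      exact ⟨neg_neg_of_pos (inv_pos.2 h1p), inv_pos.2 hp0⟩
    · rw [(hF 0).hasDerivWithinAt.derivWithin (uniqueDiffWithinAt_Ioi 0)]
      simp [F']
  have hd : d ∈ D := by
    constructor
    · rw [neg_le, inv_eq_one_div, le_div_iff₀ h1p]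
      linarith
    · rw [inv_eq_one_div, le_div_iff₀ hp0]
      linarith
  have := isMinOn_iff.1 hmin d hd
  simp only [F, mul_zero, add_zero, sub_zero, Real.one_rpow, mul_one, zero_pow two_ne_zero] at this
  linarith

lemma two_point_normalized (hp0 : 0 < p) (hp2 : p ≤ 1 / 2) {u v : ℝ} (hu : 0 ≤ u) (hv : 0 ≤ v)
    (huv : p * u + (1 - p) * v = 1) :
    1 + p ^ (2 / (1 + p)) * (p * (1 - p) * (u - v) ^ 2) ≤
      (p * u ^ (1 + p) + (1 - p) * v ^ (1 + p)) ^ (2 / (1 + p)) := by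
  have hu' : u = 1 + (1 - p) * (u - v) := by linear_combination huv
  have hv' : v = 1 - p * (u - v) := by linear_combination huv
  have hmoment := one_add_mul_sq_le_moment hp0 hp2 (d := u - v) (hu' ▸ hu) (hv' ▸ hv)
  rw [← hu', ← hv'] at hmoment
  set X := p ^ (2 / (1 + p)) * (p * (1 - p) * (u - v) ^ 2)
  have hX : 0 ≤ X := by
    have : 0 < 1 - p := by linarith
    positivity
  have hbernoulli : (1 + X) ^ ((1 + p) / 2) ≤ 1 + (1 + p) / 2 * X :=
    rpow_one_add_le_one_add_mul_self (by linarith) (by linarith) (by linarith)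
  have h := Real.rpow_le_rpow (by positivity)
    (hbernoulli.trans (by linear_combination hmoment :
      1 + (1 + p) / 2 * X ≤ p * u ^ (1 + p) + (1 - p) * v ^ (1 + p)))
    (div_nonneg zero_le_two (by linarith) : 0 ≤ 2 / (1 + p))
  rwa [← Real.rpow_mul (by linarith), div_mul_div_cancel₀ (by linarith), div_self (by linarith),
    Real.rpow_one] at h

lemma two_point_of_le_half (hp0 : 0 < p) (hp2 : p ≤ 1 / 2) {U V : ℝ} (hU : 0 ≤ U) (hV : 0 ≤ V) :
    (p * U + (1 - p) * V) ^ 2 + p ^ (2 / (1 + p)) * (p * (1 - p) * (U - V) ^ 2) ≤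
      (p * U ^ (1 + p) + (1 - p) * V ^ (1 + p)) ^ (2 / (1 + p)) := by
  have h1p : 0 < 1 - p := by linarith
  have hq : 0 < 1 + p := by linarith
  rcases (by positivity : 0 ≤ p * U + (1 - p) * V).eq_or_lt with hm | hm
  · obtain ⟨rfl, rfl⟩ : U = 0 ∧ V = 0 := by
      constructor <;> nlinarith [mul_nonneg hp0.le hU, mul_nonneg h1p.le hV]
    simp only [mul_zero, add_zero, sub_zero, ne_eq, OfNat.ofNat_ne_zero, not_false_eq_true,
      zero_pow]
    positivity
  set m := p * U + (1 - p) * V with hm_def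
  have h := two_point_normalized hp0 hp2 (div_nonneg hU hm.le) (div_nonneg hV hm.le)
    (by field_simp; exact hm_def.symm : p * (U / m) + (1 - p) * (V / m) = 1)
  have hscale : (p * (U / m) ^ (1 + p) + (1 - p) * (V / m) ^ (1 + p)) ^ (2 / (1 + p)) =
      (p * U ^ (1 + p) + (1 - p) * V ^ (1 + p)) ^ (2 / (1 + p)) / m ^ 2 := by
    rw [Real.div_rpow hU hm.le, Real.div_rpow hV hm.le, mul_div_assoc', mul_div_assoc',
      ← add_div, Real.div_rpow (by positivity) (by positivity), ← Real.rpow_mul hm.le,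
      mul_div_cancel₀ _ hq.ne', Real.rpow_two]
  rw [hscale, le_div_iff₀ (by positivity)] at h
  calc _ = (1 + p ^ (2 / (1 + p)) * (p * (1 - p) * (U / m - V / m) ^ 2)) * m ^ 2 := by
        field_simp
    _ ≤ _ := h

lemma sq_add_mul_variance_le_abs (hp0 : 0 ≤ p) (hp1 : p ≤ 1) {R : ℝ} (hR : R ≤ 1) (U V : ℝ) :
    (p * U + (1 - p) * V) ^ 2 + R * (p * (1 - p) * (U - V) ^ 2) ≤
      (p * |U| + (1 - p) * |V|) ^ 2 + R * (p * (1 - p) * (|U| - |V|) ^ 2) := by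
  have hmean : |p * U + (1 - p) * V| ≤ p * |U| + (1 - p) * |V| := by
    calc _ ≤ |p * U| + |(1 - p) * V| := abs_add_le _ _
      _ = _ := by rw [abs_mul, abs_mul, abs_of_nonneg hp0, abs_of_nonneg (sub_nonneg.2 hp1)]
  have hsq : (p * U + (1 - p) * V) ^ 2 ≤ (p * |U| + (1 - p) * |V|) ^ 2 :=
    sq_le_sq' (by linarith [neg_abs_le (p * U + (1 - p) * V)]) ((le_abs_self _).trans hmean)
  linear_combination (1 - R) * hsq + (R * p) * (sq_abs U).symm + (R * (1 - p)) * (sq_abs V).symm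

theorem two_point (hp0 : 0 < p) (hp1 : p < 1) (U V : ℝ) :
    (p * U + (1 - p) * V) ^ 2 +
        min p (1 - p) ^ (2 / (1 + min p (1 - p))) * (p * (1 - p) * (U - V) ^ 2) ≤
      (p * |U| ^ (1 + min p (1 - p)) + (1 - p) * |V| ^ (1 + min p (1 - p))) ^
        (2 / (1 + min p (1 - p))) := by
  have hmin_pos : 0 < min p (1 - p) := lt_min hp0 (by linarith)
  have hR : min p (1 - p) ^ (2 / (1 + min p (1 - p))) ≤ 1 :=
    Real.rpow_le_one hmin_pos.le (min_le_left _ _ |>.trans hp1.le) (by positivity)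
  refine (sq_add_mul_variance_le_abs hp0.le hp1.le hR U V).trans ?_
  rcases le_total p (1 - p) with hle | hle
  · rw [min_eq_left hle]
    exact two_point_of_le_half hp0 (by linarith) (abs_nonneg U) (abs_nonneg V)
  · rw [min_eq_right hle]
    have h := two_point_of_le_half (p := 1 - p) (by linarith) (by linarith) (abs_nonneg V)
      (abs_nonneg U)
    rw [sub_sub_cancel, add_comm ((1 - p) * |V| ^ (1 + (1 - p)))] at h
    linear_combination h

theorem two_point_bitChar (hp0 : 0 < p) (hp1 : p < 1) (a b : ℝ) :
    a ^ 2 + min p (1 - p) ^ (2 / (1 + min p (1 - p))) * b ^ 2 ≤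
      (∑ β, bitWeight p β * |a + bitChar p β * b| ^ (1 + min p (1 - p))) ^
        (2 / (1 + min p (1 - p))) := by
  have hmean := sum_bitWeight_mul_add_mul hp0 hp1 a b 1 0
  have hsecond := sum_bitWeight_mul_add_mul hp0 hp1 a b a b
  simp only [Fintype.sum_bool, bitWeight, if_true, Bool.false_eq_true, if_false] at hmean hsecond ⊢
  set U := a + bitChar p true * b
  set V := a + bitChar p false * b
  have hmean' : p * U + (1 - p) * V = a := by linear_combination hmean
  have hvar : p * (1 - p) * (U - V) ^ 2 = b ^ 2 := by
    linear_combination hsecond - (p * U + (1 - p) * V + a) * hmean'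
  calc _ = (p * U + (1 - p) * V) ^ 2 +
        min p (1 - p) ^ (2 / (1 + min p (1 - p))) * (p * (1 - p) * (U - V) ^ 2) := by
        rw [hmean', hvar]
    _ ≤ _ := two_point hp0 hp1 U V

lemma sum_filter_le_rpow_neg_mul_sum {ι : Type*} [Fintype ι] (deg : ι → ℕ) {a : ι → ℝ}
    (ha : ∀ i, 0 ≤ a i) {ρ : ℝ} (hρ0 : 0 < ρ) (hρ1 : ρ ≤ 1) (K : ℝ) :
    ∑ i ∈ univ.filter (fun i => (deg i : ℝ) ≤ K), a i ≤ ρ ^ (-K) * ∑ i, ρ ^ deg i * a i := by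
  rw [mul_sum]
  calc ∑ i ∈ univ.filter (fun i => (deg i : ℝ) ≤ K), a i
      ≤ ∑ i ∈ univ.filter (fun i => (deg i : ℝ) ≤ K), ρ ^ (-K) * (ρ ^ deg i * a i) := by
        refine sum_le_sum fun i hi => ?_
        have hdeg : 1 ≤ ρ ^ ((deg i : ℝ) - K) :=
          Real.one_le_rpow_of_pos_of_le_one_of_nonpos hρ0 hρ1 (by linarith [(mem_filter.1 hi).2])
        rw [← mul_assoc, ← Real.rpow_natCast, ← Real.rpow_add hρ0, neg_add_eq_sub]
        exact le_mul_of_one_le_left (ha i) hdeg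
    _ ≤ ∑ i, ρ ^ (-K) * (ρ ^ deg i * a i) :=
        sum_le_sum_of_subset_of_nonneg (filter_subset _ _) fun i _ _ => by
          have := ha i
          positivity

theorem sum_rpow_card_mul_fhat_sq_le (hp0 : 0 < p) (hp1 : p < 1) (f : (Fin n → Bool) → ℝ) :
    ∑ S, (min p (1 - p) ^ (2 / (1 + min p (1 - p)))) ^ S.card * fhat p f S ^ 2 ≤
      pexp p (fun x => |f x| ^ (1 + min p (1 - p))) ^ (2 / (1 + min p (1 - p))) := by
  have hmin_pos : 0 < min p (1 - p) := lt_min hp0 (by linarith)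
  set ρ := min p (1 - p) ^ (2 / (1 + min p (1 - p)))
  have hρ : Real.sqrt ρ ^ 2 = ρ := Real.sq_sqrt (Real.rpow_nonneg hmin_pos.le _)
  rw [sum_pow_card_mul_fhat_sq, ← hρ, ← pexp_noiseOp_sq hp0 hp1]
  refine pexp_noiseOp_sq_le hp0 hp1 (by positivity) ?_ (fun a b => ?_) f
  · linarith [min_le_right p (1 - p)]
  · rw [hρ]
    exact two_point_bitChar hp0 hp1 a b

lemma pexp_mem_Icc_of_bool (hp0 : 0 < p) (hp1 : p < 1) {f : (Fin n → Bool) → ℝ}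
    (hf : ∀ x, f x = 0 ∨ f x = 1) : pexp p f ∈ Set.Icc 0 1 := by
  have hf01 : ∀ x, 0 ≤ f x ∧ f x ≤ 1 := fun x => by rcases hf x with h | h <;> simp [h]
  refine ⟨pexp_nonneg hp0 hp1 fun x => (hf01 x).1, ?_⟩
  rw [← pexp_one (p := p) (n := n)]
  exact pexp_mono hp0 hp1 fun x => (hf01 x).2

lemma pexp_abs_rpow_of_bool {f : (Fin n → Bool) → ℝ} (hf : ∀ x, f x = 0 ∨ f x = 1) {q : ℝ}
    (hq : 0 < q) : pexp p (fun x => |f x| ^ q) = pexp p f := by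
  congr 1
  funext x
  rcases hf x with h | h <;> simp [h, Real.zero_rpow hq.ne']

theorem sum_filter_fhat_sq_le (hp0 : 0 < p) (hp1 : p < 1) (f : (Fin n → Bool) → ℝ)
    (hf : ∀ x, f x = 0 ∨ f x = 1) (ε : ℝ) :
    ∑ S ∈ univ.filter (fun S : Finset (Fin n) =>
        (S.card : ℝ) ≤ (1 - ε) * Real.log (pexp p f) / Real.log (min p (1 - p))),
      fhat p f S ^ 2 ≤ pexp p f ^ (2 * ε / (1 + min p (1 - p))) := by
  have hl0 : 0 < min p (1 - p) := lt_min hp0 (by linarith)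
  have hl1 : min p (1 - p) < 1 := (min_le_left _ _).trans_lt hp1
  have hρ0 : 0 < min p (1 - p) ^ (2 / (1 + min p (1 - p))) := Real.rpow_pos_of_pos hl0 _
  have hρ1 : min p (1 - p) ^ (2 / (1 + min p (1 - p))) ≤ 1 :=
    Real.rpow_le_one hl0.le hl1.le (by positivity)
  refine (sum_filter_le_rpow_neg_mul_sum card (fun S => sq_nonneg (fhat p f S)) hρ0 hρ1 _).trans
    ((mul_le_mul_of_nonneg_left (sum_rpow_card_mul_fhat_sq_le hp0 hp1 f)
      (Real.rpow_nonneg hρ0.le _)).trans ?_)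
  rw [pexp_abs_rpow_of_bool hf (by positivity)]
  rcases (pexp_mem_Icc_of_bool hp0 hp1 hf).1.eq_or_lt with hα | hα
  · rw [← hα, Real.zero_rpow (by positivity), mul_zero]
    exact Real.rpow_nonneg le_rfl _
  set l := min p (1 - p)
  -- `l ^ logb l α = α` turns `ρ ^ (-K)` into `α ^ (-2 (1 - ε) / (1 + l))`, where `α = pexp p f`
  have hK : 2 / (1 + l) * -((1 - ε) * Real.log (pexp p f) / Real.log l) =
      Real.logb l (pexp p f) * (-(2 / (1 + l)) * (1 - ε)) := by
    rw [Real.logb]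
    ring
  rw [← Real.rpow_mul hl0.le, hK, Real.rpow_mul hl0.le, Real.rpow_logb hl0 hl1.ne hα,
    ← Real.rpow_add hα]
  exact le_of_eq (by congr 1; ring)

end BiasedLevelK

theorem stmt7_general (n : ℕ) (p : ℝ) (hp0 : 0 < p) (hp1 : p < 1)
    (f : (Fin n → Bool) → ℝ) (hf : ∀ x, f x = 0 ∨ f x = 1)
    (ε : ℝ) :
    ((∑ S ∈ univ.filter (fun S : Finset (Fin n) =>
          (S.card : ℝ) ≤ (1 - ε) * Real.log (pexp p f) / Real.log (min p (1 - p))),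
        fhat p f S ^ 2)
      ≤ (pexp p f) ^ ((2 * ε) / (1 + min p (1 - p))))
    ∧ ((∑ S ∈ univ.filter (fun S : Finset (Fin n) =>
          (S.card : ℝ) ≤ (1 / 8) * Real.log (pexp p f) / Real.log (min p (1 - p))),
        fhat p f S ^ 2)
      ≤ (pexp p f) ^ ((7 : ℝ) / 6)) := by
  refine ⟨BiasedLevelK.sum_filter_fhat_sq_le hp0 hp1 f hf ε, ?_⟩
  have h := BiasedLevelK.sum_filter_fhat_sq_le hp0 hp1 f hf (7 / 8)
  rw [show (1 : ℝ) - 7 / 8 = 1 / 8 by norm_num] at h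
  obtain ⟨hα0, hα1⟩ := BiasedLevelK.pexp_mem_Icc_of_bool hp0 hp1 hf
  have hexp : (7 : ℝ) / 6 ≤ 2 * (7 / 8) / (1 + min p (1 - p)) := by
    rw [le_div_iff₀ (by positivity)]
    linarith [min_le_left p (1 - p), min_le_right p (1 - p)]
  exact h.trans (Real.rpow_le_rpow_of_exponent_ge' hα0 hα1 (by norm_num) hexp)

/-- Biased level-`k` inequality: for boolean `f` with `α = E[f]` and `λ = min{p,1−p}`,
for any `ε ∈ (0,1)`, `Σ_{|S| ≤ (1−ε)·ln α / ln λ} f̂(S)² ≤ α^{2ε/(1+λ)}`; in particular,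
with `ε = 7/8`, `Σ_{|S| ≤ (1/8)·ln α / ln λ} f̂(S)² ≤ α^{7/6}`. -/
theorem stmt7 (n : ℕ) (p : ℝ) (hp0 : 0 < p) (hp1 : p < 1)
    (f : (Fin n → Bool) → ℝ) (hf : ∀ x, f x = 0 ∨ f x = 1)
    (ε : ℝ) (hε0 : 0 < ε) (hε1 : ε < 1) :
    ((∑ S ∈ univ.filter (fun S : Finset (Fin n) =>
          (S.card : ℝ) ≤ (1 - ε) * Real.log (pexp p f) / Real.log (min p (1 - p))),
        fhat p f S ^ 2)
      ≤ (pexp p f) ^ ((2 * ε) / (1 + min p (1 - p))))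
    ∧ ((∑ S ∈ univ.filter (fun S : Finset (Fin n) =>
          (S.card : ℝ) ≤ (1 / 8) * Real.log (pexp p f) / Real.log (min p (1 - p))),
        fhat p f S ^ 2)
      ≤ (pexp p f) ^ ((7 : ℝ) / 6)) :=
  stmt7_general n p hp0 hp1 f hf ε
end

section
/- Let a, b, c ∈ {0,1} be random variables with a = f(Z_A, Z_B), b = f(Z_A, Z_C), c = f(Z_A, Z_D), where Z_A, Z_B, Z_C, Z_D are independent i.i.d. vectors, each pair (a,b), (a,c), (b,c) has the same joint distribution, E[a] = P, and Var(E[f(Z_A, Z_B)|Z_A]) ≤ ρ·Var(f(Z_A,Z_B)). Then E[Majority(a,b,c)] ≤ 3ρP + 3(1−ρ)P². -/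
/-!
For fixed `Z_A` the three looks `a, b, c` are conditionally i.i.d. with mean `g(Z_A) = E[f(Z_A, ·)]`,
so the union bound `Maj(a,b,c) ≤ ab + ac + bc` gives `E[Maj | Z_A] ≤ 3 g(Z_A)²`. Averaging over `Z_A`,
the variance hypothesis together with `f² = f` bounds `E[g²]` by `ρ P + (1 - ρ) P²`.
-/

open Finset

theorem sum_wt_eq_one (p : ℝ) (n : ℕ) : ∑ x : Fin n → Bool, wt p x = 1 := by
  unfold wt
  rw [← Fintype.prod_sum fun (_ : Fin n) (b : Bool) => if b then p else 1 - p]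
  simp

theorem wt_nonneg {p : ℝ} (hp0 : 0 ≤ p) (hp1 : p ≤ 1) {n : ℕ} (x : Fin n → Bool) :
    0 ≤ wt p x :=
  prod_nonneg fun i _ => by split <;> linarith

section pexp

variable {p : ℝ} {n : ℕ}

theorem pexp_mono (hp0 : 0 ≤ p) (hp1 : p ≤ 1) {g h : (Fin n → Bool) → ℝ}
    (hgh : ∀ x, g x ≤ h x) : pexp p g ≤ pexp p h :=
  sum_le_sum fun x _ => mul_le_mul_of_nonneg_left (hgh x) (wt_nonneg hp0 hp1 x)

theorem pexp_const_mul (c : ℝ) (g : (Fin n → Bool) → ℝ) :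
    pexp p (fun x => c * g x) = c * pexp p g := by
  simp only [pexp, mul_sum]
  exact sum_congr rfl fun x _ => by ring

theorem pexp_const_add_mul (A B : ℝ) (g : (Fin n → Bool) → ℝ) :
    pexp p (fun x => A + B * g x) = A + B * pexp p g := by
  simp only [pexp, mul_add, sum_add_distrib, ← sum_mul, sum_wt_eq_one, one_mul]
  rw [mul_sum]
  exact congrArg _ (sum_congr rfl fun x _ => by ring)

theorem pexp_pairwise_mul (u : (Fin n → Bool) → ℝ) :
    (pexp p fun x => pexp p fun y => pexp p fun z => u x * u y + u x * u z + u y * u z)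
      = 3 * pexp p u ^ 2 := by
  have hz : ∀ x y, (pexp p fun z => u x * u y + u x * u z + u y * u z)
      = u x * u y + (u x + u y) * pexp p u := fun x y => by
    simp only [add_assoc, ← add_mul, pexp_const_add_mul]
  have hy : ∀ x, (pexp p fun y => u x * u y + (u x + u y) * pexp p u)
      = u x * pexp p u + (u x + pexp p u) * pexp p u := fun x => by
    simp_rw [show ∀ y, u x * u y + (u x + u y) * pexp p u
        = u x * pexp p u + (u x + pexp p u) * u y from fun y => by ring]
    rw [pexp_const_add_mul]
  simp_rw [hz, hy, show ∀ x, u x * pexp p u + (u x + pexp p u) * pexp p u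
      = pexp p u * pexp p u + 2 * pexp p u * u x from fun x => by ring]
  rw [pexp_const_add_mul]
  ring

end pexp

theorem majority_le_sum_pairwise_mul {x y z : ℝ} (hx : x = 0 ∨ x = 1) (hy : y = 0 ∨ y = 1)
    (hz : z = 0 ∨ z = 1) :
    (if 2 ≤ x + y + z then (1 : ℝ) else 0) ≤ x * y + x * z + y * z := by
  rcases hx with rfl | rfl <;> rcases hy with rfl | rfl <;> rcases hz with rfl | rfl <;> norm_num

theorem stmt14_general (a b : ℕ) (p ρ : ℝ) (hp0 : 0 ≤ p) (hp1 : p ≤ 1)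
    (f : (Fin a → Bool) → (Fin b → Bool) → ℝ)
    (hf : ∀ xA xB, f xA xB = 0 ∨ f xA xB = 1)
    (hvar :
      pexp p (fun xA => (pexp p fun xB => f xA xB) ^ 2)
          - (pexp p fun xA => pexp p fun xB => f xA xB) ^ 2
        ≤ ρ * (pexp p (fun xA => pexp p fun xB => (f xA xB) ^ 2)
          - (pexp p fun xA => pexp p fun xB => f xA xB) ^ 2)) :
    (pexp p fun xA => pexp p fun xB => pexp p fun xC => pexp p fun xD =>
        if 2 ≤ f xA xB + f xA xC + f xA xD then (1 : ℝ) else 0)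
      ≤ 3 * ρ * (pexp p fun xA => pexp p fun xB => f xA xB)
        + 3 * (1 - ρ) * (pexp p fun xA => pexp p fun xB => f xA xB) ^ 2 := by
  have hsq : ∀ xA xB, f xA xB ^ 2 = f xA xB := fun xA xB => by
    rcases hf xA xB with h | h <;> rw [h] <;> norm_num
  simp only [hsq] at hvar
  calc _ ≤ pexp p fun xA => pexp p fun xB => pexp p fun xC => pexp p fun xD =>
          f xA xB * f xA xC + f xA xB * f xA xD + f xA xC * f xA xD :=
        pexp_mono hp0 hp1 fun xA => pexp_mono hp0 hp1 fun xB => pexp_mono hp0 hp1 fun xC =>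
          pexp_mono hp0 hp1 fun xD => majority_le_sum_pairwise_mul (hf _ _) (hf _ _) (hf _ _)
    _ = 3 * pexp p fun xA => (pexp p fun xB => f xA xB) ^ 2 := by
        simp only [pexp_pairwise_mul, pexp_const_mul]
    _ ≤ _ := by linarith

/-- Three-look majority bound: with `a = f(Z_A,Z_B)`, `b = f(Z_A,Z_C)`, `c = f(Z_A,Z_D)`
boolean-valued, `Z_A,Z_B,Z_C,Z_D` independent i.i.d. Bernoulli(p) vectors,
`P = E[a]`, and `Var(E[f(Z_A,Z_B)|Z_A]) ≤ ρ·Var(f(Z_A,Z_B))`, one has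
`E[Majority(a,b,c)] ≤ 3ρP + 3(1−ρ)P²`. -/
theorem stmt14 (a b : ℕ) (p ρ : ℝ) (hp0 : 0 ≤ p) (hp1 : p ≤ 1)
    (hρ0 : 0 ≤ ρ) (hρ1 : ρ ≤ 1)
    (f : (Fin a → Bool) → (Fin b → Bool) → ℝ)
    (hf : ∀ xA xB, f xA xB = 0 ∨ f xA xB = 1)
    (hvar :
      pexp p (fun xA => (pexp p fun xB => f xA xB) ^ 2)
          - (pexp p fun xA => pexp p fun xB => f xA xB) ^ 2
        ≤ ρ * (pexp p (fun xA => pexp p fun xB => (f xA xB) ^ 2)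
          - (pexp p fun xA => pexp p fun xB => f xA xB) ^ 2)) :
    (pexp p fun xA => pexp p fun xB => pexp p fun xC => pexp p fun xD =>
        if 2 ≤ f xA xB + f xA xC + f xA xD then (1 : ℝ) else 0)
      ≤ 3 * ρ * (pexp p fun xA => pexp p fun xB => f xA xB)
        + 3 * (1 - ρ) * (pexp p fun xA => pexp p fun xB => f xA xB) ^ 2 :=
  stmt14_general a b p ρ hp0 hp1 f hf hvar
end
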